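/- A dual certificate certifies the exact value of the atomic norm. Let d be a positive integer, let u ∈ ℂ^d with ‖u‖₂ = 1, let r_0, …, r_{L−1} ∈ [0,1)² be distinct, let α_0, …, α_{L−1} ∈ ℂ be nonzero, and set Z = Σ_{ℓ=0}^{L−1} α_ℓ · u a(r_ℓ)^H. Suppose there exists a matrix W ∈ ℂ^(d×MP) such that ‖W a(r)‖₂ ≤ 1 for every r ∈ [0,1)² and W a(r_ℓ) = sign(α_ℓ) · u for every ℓ. Then ‖Z‖_A = Σ_{ℓ=0}^{L−1} |α_ℓ|. -/

import Mathlib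

open scoped BigOperators ComplexConjugate ENNReal Matrix

noncomputable section

namespace DBD

/-- Index set for `ℂ^(MP)` with `M = 2N+1`: pairs `v = (n,p)`,
`n ∈ {-N,…,N}` (encoded via `Fin (2N+1)` shifted by `N`) and `p ∈ {0,…,P-1}`. -/
abbrev Idx (N P : ℕ) := Fin (2 * N + 1) × Fin P

/-- The atom vector `a(r) ∈ ℂ^(MP)` with `[a(r)]_(n,p) = exp(2πi(τ n + ν p))`,
where the first index encodes `n = v.1 - N ∈ {-N,…,N}`. -/
def atom (N P : ℕ) (r : ℝ × ℝ) : Idx N P → ℂ := fun v =>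
  Complex.exp (2 * (Real.pi : ℂ) * Complex.I *
    ((r.1 : ℂ) * (((((v.1 : ℕ) : ℤ) - (N : ℤ)) : ℤ) : ℂ) + (r.2 : ℂ) * ((v.2 : ℕ) : ℂ)))

/-- The parameter domain `[0,1)²`. -/
def box : Set (ℝ × ℝ) := Set.Ico (0 : ℝ) 1 ×ˢ Set.Ico (0 : ℝ) 1

/-- The rank-one atom matrix `u a(r)ᴴ ∈ ℂ^(d×MP)`. -/
def atomMat (N P : ℕ) {d : ℕ} (u : Fin d → ℂ) (r : ℝ × ℝ) :
    Matrix (Fin d) (Idx N P) ℂ := fun i v => u i * conj (atom N P r v)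

/-- Euclidean (ℓ₂) norm on `ℂ^d`. -/
def enorm2 {d : ℕ} (x : Fin d → ℂ) : ℝ := Real.sqrt (∑ i, ‖x i‖ ^ 2)

/-- The atomic norm `‖Z‖_A ∈ [0,∞]`: infimum of `Σ_ℓ |α_ℓ|` over decompositions
`Z = Σ_ℓ α_ℓ · u a(r_ℓ)ᴴ` with a single unit-norm `u` and `r_ℓ ∈ [0,1)²`;
`+∞` (the infimum over the empty set) if no decomposition exists. -/
def anorm (N P : ℕ) {d : ℕ} (Z : Matrix (Fin d) (Idx N P) ℂ) : ℝ≥0∞ :=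
  sInf {x : ℝ≥0∞ | ∃ (L : ℕ) (α : Fin L → ℂ) (rs : Fin L → ℝ × ℝ) (u : Fin d → ℂ),
    enorm2 u = 1 ∧ (∀ ℓ, rs ℓ ∈ box) ∧
    Z = ∑ ℓ, α ℓ • atomMat N P u (rs ℓ) ∧
    x = ENNReal.ofReal (∑ ℓ, ‖α ℓ‖)}

/-- Standard inner product `⟨x,y⟩ = xᴴ y` on `ℂ^(MP)`. -/
def vinner (N P : ℕ) (x y : Idx N P → ℂ) : ℂ := ∑ v, conj (x v) * y v

/-- Frobenius inner product `⟨A,B⟩ = Tr(Aᴴ B)`. -/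
def finner {m n : Type*} [Fintype m] [Fintype n] (A B : Matrix m n ℂ) : ℂ :=
  (Aᴴ * B).trace

/-- `sign(c) = c / |c|` for complex `c`. -/
def csign (c : ℂ) : ℂ := c / ((‖c‖ : ℝ) : ℂ)

/-- The trace-form measurement operator `[א(Z)]_v = Tr(G_v Z)`. -/
def aleph (N P : ℕ) {d : ℕ} (G : Idx N P → Matrix (Idx N P) (Fin d) ℂ)
    (Z : Matrix (Fin d) (Idx N P) ℂ) : Idx N P → ℂ := fun v => (G v * Z).trace

/-- The adjoint operator `א*(q) = Σ_v [q]_v G_vᴴ`. -/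
def alephAdj (N P : ℕ) {d : ℕ} (G : Idx N P → Matrix (Idx N P) (Fin d) ℂ)
    (q : Idx N P → ℂ) : Matrix (Fin d) (Idx N P) ℂ := ∑ v, q v • (G v)ᴴ

/-- The dual atomic norm `‖W‖*_A = sup{ ⟨U,W⟩_ℝ : ‖U‖_A ≤ 1 }`. -/
def dualNorm (N P : ℕ) {d : ℕ} (W : Matrix (Fin d) (Idx N P) ℂ) : ℝ :=
  sSup {x : ℝ | ∃ U : Matrix (Fin d) (Idx N P) ℂ, anorm N P U ≤ 1 ∧ x = (finner U W).re}

end DBD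

open DBD

/-! Pairing with the certificate, `⟨·, W⟩ = Tr((·)ᴴ W)`, gives weak duality: on an atom
`u a(r)ᴴ` with `‖u‖₂ = 1` it equals `uᴴ W a(r)`, of modulus at most `1` by Cauchy–Schwarz, so
`|⟨Z, W⟩| ≤ Σ_k |β_k|` for every atomic decomposition `Z = Σ_k β_k u a(s_k)ᴴ`. The interpolation
conditions make `⟨Z, W⟩ = Σ_ℓ conj(α_ℓ) sign(α_ℓ) = Σ_ℓ |α_ℓ|`, so the given decomposition is
optimal. -/

namespace DBD

open Matrix

lemma enorm2_eq_norm_toLp {d : ℕ} (x : Fin d → ℂ) : enorm2 x = ‖WithLp.toLp 2 x‖ := by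
  rw [EuclideanSpace.norm_eq]
  rfl

lemma norm_star_dotProduct_le {d : ℕ} (x y : Fin d → ℂ) :
    ‖star x ⬝ᵥ y‖ ≤ enorm2 x * enorm2 y := by
  rw [enorm2_eq_norm_toLp, enorm2_eq_norm_toLp, dotProduct_comm,
    ← EuclideanSpace.inner_toLp_toLp]
  exact norm_inner_le_norm _ _

lemma star_dotProduct_self_of_enorm2_eq_one {d : ℕ} {u : Fin d → ℂ} (hu : enorm2 u = 1) :
    star u ⬝ᵥ u = 1 := by
  rw [dotProduct_comm, ← EuclideanSpace.inner_toLp_toLp, inner_self_eq_norm_sq_to_K,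
    ← enorm2_eq_norm_toLp, hu]
  simp

lemma conj_mul_csign (c : ℂ) : conj c * csign c = ‖c‖ := by
  rcases eq_or_ne c 0 with rfl | hc
  · simp [csign]
  · have : (‖c‖ : ℂ) ≠ 0 := by exact_mod_cast norm_ne_zero_iff.mpr hc
    rw [csign, mul_div_assoc', mul_comm, Complex.mul_conj, Complex.normSq_eq_norm_sq]
    push_cast
    field_simp

lemma finner_sum_smul_left {ι m n : Type*} [Fintype ι] [Fintype m] [Fintype n]
    (β : ι → ℂ) (A : ι → Matrix m n ℂ) (B : Matrix m n ℂ) :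
    finner (∑ k, β k • A k) B = ∑ k, conj (β k) * finner (A k) B := by
  simp [finner, conjTranspose_sum, Matrix.sum_mul, trace_sum]

lemma finner_atomMat {N P d : ℕ} (u : Fin d → ℂ) (r : ℝ × ℝ)
    (W : Matrix (Fin d) (Idx N P) ℂ) :
    finner (atomMat N P u r) W = star u ⬝ᵥ W *ᵥ atom N P r := by
  have : atomMat N P u r = vecMulVec u (star (atom N P r)) := rfl
  rw [finner, this, conjTranspose_vecMulVec, star_star, vecMulVec_mul, trace_vecMulVec,
    dotProduct_comm, dotProduct_mulVec]

lemma ofReal_norm_finner_le_anorm {N P d : ℕ} (W : Matrix (Fin d) (Idx N P) ℂ)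
    (hW : ∀ r ∈ box, enorm2 (W *ᵥ atom N P r) ≤ 1) (Z : Matrix (Fin d) (Idx N P) ℂ) :
    ENNReal.ofReal ‖finner Z W‖ ≤ anorm N P Z := by
  refine le_sInf ?_
  rintro x ⟨L, β, ss, u, hu, hss, rfl, rfl⟩
  refine ENNReal.ofReal_le_ofReal ?_
  rw [finner_sum_smul_left]
  refine (norm_sum_le _ _).trans (Finset.sum_le_sum fun k _ => ?_)
  have hk : ‖star u ⬝ᵥ W *ᵥ atom N P (ss k)‖ ≤ 1 :=
    (norm_star_dotProduct_le _ _).trans (by rw [hu, one_mul]; exact hW _ (hss k))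
  rw [norm_mul, Complex.norm_conj, finner_atomMat]
  exact mul_le_of_le_one_right (norm_nonneg _) hk

end DBD

theorem atomicNorm_eq_of_certificate_general
    (N P : ℕ) (d : ℕ) (L : ℕ)
    (u : Fin d → ℂ) (hu : enorm2 u = 1)
    (rs : Fin L → ℝ × ℝ) (hrs : ∀ ℓ, rs ℓ ∈ box)
    (α : Fin L → ℂ)
    (Z : Matrix (Fin d) (Idx N P) ℂ)
    (hZ : Z = ∑ ℓ, α ℓ • atomMat N P u (rs ℓ))
    (W : Matrix (Fin d) (Idx N P) ℂ)
    (hW_bound : ∀ r ∈ box, enorm2 (W.mulVec (atom N P r)) ≤ 1)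
    (hW_interp : ∀ ℓ, W.mulVec (atom N P (rs ℓ)) = csign (α ℓ) • u) :
    anorm N P Z = ENNReal.ofReal (∑ ℓ, ‖α ℓ‖) := by
  have hpairing : finner Z W = ((∑ ℓ, ‖α ℓ‖ : ℝ) : ℂ) := by
    rw [hZ, finner_sum_smul_left, Complex.ofReal_sum]
    refine Finset.sum_congr rfl fun ℓ _ => ?_
    rw [finner_atomMat, hW_interp, dotProduct_smul,
      star_dotProduct_self_of_enorm2_eq_one hu, smul_eq_mul, mul_one, conj_mul_csign]
  refine le_antisymm (sInf_le ⟨L, α, rs, u, hu, hrs, hZ, rfl⟩) ?_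
  calc ENNReal.ofReal (∑ ℓ, ‖α ℓ‖)
      = ENNReal.ofReal ‖finner Z W‖ := by
        rw [hpairing, Complex.norm_real, Real.norm_of_nonneg (by positivity)]
    _ ≤ anorm N P Z := ofReal_norm_finner_le_anorm W hW_bound Z

/-- **A dual certificate certifies the exact value of the atomic norm:** if
`W a(r)` has norm at most one on `[0,1)²` and equals `sign(α_ℓ) u` at each `r_ℓ`,
then `‖Σ_ℓ α_ℓ u a(r_ℓ)ᴴ‖_A = Σ_ℓ |α_ℓ|`. -/
theorem atomicNorm_eq_of_certificate
    (N P : ℕ) (hN : 0 < N) (hP : 0 < P) (d : ℕ) (hd : 0 < d) (L : ℕ)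
    (u : Fin d → ℂ) (hu : enorm2 u = 1)
    (rs : Fin L → ℝ × ℝ) (hrs : ∀ ℓ, rs ℓ ∈ box)
    (hrs_distinct : Function.Injective rs)
    (α : Fin L → ℂ) (hα : ∀ ℓ, α ℓ ≠ 0)
    (Z : Matrix (Fin d) (Idx N P) ℂ)
    (hZ : Z = ∑ ℓ, α ℓ • atomMat N P u (rs ℓ))
    (W : Matrix (Fin d) (Idx N P) ℂ)
    (hW_bound : ∀ r ∈ box, enorm2 (W.mulVec (atom N P r)) ≤ 1)
    (hW_interp : ∀ ℓ, W.mulVec (atom N P (rs ℓ)) = csign (α ℓ) • u) :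
    anorm N P Z = ENNReal.ofReal (∑ ℓ, ‖α ℓ‖) :=
  atomicNorm_eq_of_certificate_general N P d L u hu rs hrs α Z hZ W hW_bound hW_interp
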